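/- Let T be a Young tableau of shape λ ⊢ n containing a subtableau S of shape μ ⊢ k (μ ⊂ λ, S = T|_{D_μ}). Suppose σ ∈ S_A is a permutation such that some entry s of S with σ(s) = a lies in column j > v of S, where a is an entry of T \ S located at position (u,v) with u = λ'_v, and σ fixes the entry s' = S(i,v) in the same row i as s. Then c_λ(T) · c_μ(σ·S) = 0, where σ·S = σ ∘ S. -/

import Mathlib

open scoped Classical

/-- The row symmetrizer `a_μ(T) = ∑_{σ ∈ R_T} σ` of a Young tableau `T : D_μ → A`:
the sum of all permutations of `A` which fix every element outside the image of `T`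
and map the entries of each row of `T` to entries of the same row. -/
noncomputable def aRow (K : Type*) [Field K] {A : Type*} [Fintype A] [DecidableEq A]
    (μ : YoungDiagram) (T : μ.cells → A) : MonoidAlgebra K (Equiv.Perm A) :=
  ∑ σ ∈ Finset.univ.filter (fun σ : Equiv.Perm A =>
      (∀ x : A, (∀ c : μ.cells, T c ≠ x) → σ x = x) ∧
      ∀ c : μ.cells, ∃ c' : μ.cells, (c' : ℕ × ℕ).1 = (c : ℕ × ℕ).1 ∧ σ (T c) = T c'),
    MonoidAlgebra.single σ 1

/-- The column antisymmetrizer `b_μ(T) = ∑_{τ ∈ C_T} sgn(τ)·τ` of a Young tableau. -/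
noncomputable def bCol (K : Type*) [Field K] {A : Type*} [Fintype A] [DecidableEq A]
    (μ : YoungDiagram) (T : μ.cells → A) : MonoidAlgebra K (Equiv.Perm A) :=
  ∑ τ ∈ Finset.univ.filter (fun τ : Equiv.Perm A =>
      (∀ x : A, (∀ c : μ.cells, T c ≠ x) → τ x = x) ∧
      ∀ c : μ.cells, ∃ c' : μ.cells, (c' : ℕ × ℕ).2 = (c : ℕ × ℕ).2 ∧ τ (T c) = T c'),
    MonoidAlgebra.single τ ((Equiv.Perm.sign τ : ℤ) : K)

/-- The Young symmetrizer `c_μ(T) = a_μ(T) · b_μ(T)`. -/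
noncomputable def youngSymm (K : Type*) [Field K] {A : Type*} [Fintype A] [DecidableEq A]
    (μ : YoungDiagram) (T : μ.cells → A) : MonoidAlgebra K (Equiv.Perm A) :=
  aRow K μ T * bCol K μ T

/-- The set of entries in column `j` of the tableau `T`. -/
noncomputable def colSet {A : Type*} [Fintype A] [DecidableEq A]
    (μ : YoungDiagram) (T : μ.cells → A) (j : ℕ) : Finset A :=
  Finset.univ.filter (fun x : A => ∃ c : μ.cells, (c : ℕ × ℕ).2 = j ∧ T c = x)

/-- `z_j = ∑_{b ∈ C_j(S)} (a,b)` in the group algebra. -/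
noncomputable def zCol (K : Type*) [Field K] {A : Type*} [Fintype A] [DecidableEq A]
    (μ : YoungDiagram) (T : μ.cells → A) (a : A) (j : ℕ) :
    MonoidAlgebra K (Equiv.Perm A) :=
  ∑ b ∈ colSet μ T j, MonoidAlgebra.single (Equiv.swap a b) (1 : K)

/-- `α_μ`: the product of all hook lengths of the Young diagram `μ`. -/
def hookProd (μ : YoungDiagram) : ℕ :=
  ∏ c ∈ μ.cells, (μ.rowLen c.1 - c.2 + (μ.colLen c.2 - c.1) - 1)

section Helpers


variable {K : Type*} [Field K] {A : Type*} [Fintype A] [DecidableEq A]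

/-- Closure of the column predicate under right multiplication. -/
lemma colPred_mul (μ : YoungDiagram) (T : μ.cells → A) (τ t : Equiv.Perm A)
    (hτ : (∀ x : A, (∀ c : μ.cells, T c ≠ x) → τ x = x) ∧
      ∀ c : μ.cells, ∃ c' : μ.cells, (c' : ℕ × ℕ).2 = (c : ℕ × ℕ).2 ∧ τ (T c) = T c')
    (ht : (∀ x : A, (∀ c : μ.cells, T c ≠ x) → t x = x) ∧
      ∀ c : μ.cells, ∃ c' : μ.cells, (c' : ℕ × ℕ).2 = (c : ℕ × ℕ).2 ∧ t (T c) = T c') :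
    (∀ x : A, (∀ c : μ.cells, T c ≠ x) → (τ * t) x = x) ∧
      ∀ c : μ.cells, ∃ c' : μ.cells, (c' : ℕ × ℕ).2 = (c : ℕ × ℕ).2 ∧ (τ * t) (T c) = T c' := by
  constructor
  · intro x hx
    simp [Equiv.Perm.mul_apply, ht.1 x hx, hτ.1 x hx]
  · intro c
    obtain ⟨c', h1, h2⟩ := ht.2 c
    obtain ⟨c'', h1', h2'⟩ := hτ.2 c'
    exact ⟨c'', h1'.trans h1, by simp [Equiv.Perm.mul_apply, h2, h2']⟩

lemma rowPred_mul (μ : YoungDiagram) (T : μ.cells → A) (t σ : Equiv.Perm A)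
    (ht : (∀ x : A, (∀ c : μ.cells, T c ≠ x) → t x = x) ∧
      ∀ c : μ.cells, ∃ c' : μ.cells, (c' : ℕ × ℕ).1 = (c : ℕ × ℕ).1 ∧ t (T c) = T c')
    (hσ : (∀ x : A, (∀ c : μ.cells, T c ≠ x) → σ x = x) ∧
      ∀ c : μ.cells, ∃ c' : μ.cells, (c' : ℕ × ℕ).1 = (c : ℕ × ℕ).1 ∧ σ (T c) = T c') :
    (∀ x : A, (∀ c : μ.cells, T c ≠ x) → (t * σ) x = x) ∧
      ∀ c : μ.cells, ∃ c' : μ.cells, (c' : ℕ × ℕ).1 = (c : ℕ × ℕ).1 ∧ (t * σ) (T c) = T c' := by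
  constructor
  · intro x hx
    simp [Equiv.Perm.mul_apply, hσ.1 x hx, ht.1 x hx]
  · intro c
    obtain ⟨c', h1, h2⟩ := hσ.2 c
    obtain ⟨c'', h1', h2'⟩ := ht.2 c'
    exact ⟨c'', h1'.trans h1, by simp [Equiv.Perm.mul_apply, h2, h2']⟩

lemma bCol_mul_t (μ : YoungDiagram) (T : μ.cells → A) (t : Equiv.Perm A)
    (ht : (∀ x : A, (∀ c : μ.cells, T c ≠ x) → t x = x) ∧
      ∀ c : μ.cells, ∃ c' : μ.cells, (c' : ℕ × ℕ).2 = (c : ℕ × ℕ).2 ∧ t (T c) = T c')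
    (htt : t * t = 1) (hsgn : Equiv.Perm.sign t = -1) :
    bCol K μ T * MonoidAlgebra.single t (1 : K) = - bCol K μ T := by
  unfold bCol
  rw [Finset.sum_mul, ← Finset.sum_neg_distrib]
  refine Finset.sum_nbij' (fun τ => τ * t) (fun τ => τ * t) ?_ ?_ ?_ ?_ ?_
  · intro τ hτ
    simp only [Finset.mem_filter, Finset.mem_univ, true_and] at hτ ⊢
    exact colPred_mul μ T τ t hτ ht
  · intro τ hτ
    simp only [Finset.mem_filter, Finset.mem_univ, true_and] at hτ ⊢
    exact colPred_mul μ T τ t hτ ht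
  · intro τ _; show τ * t * t = τ; rw [mul_assoc, htt, mul_one]
  · intro τ _; show τ * t * t = τ; rw [mul_assoc, htt, mul_one]
  · intro τ hτ
    rw [MonoidAlgebra.single_mul_single, mul_one, map_mul, hsgn, mul_neg_one]
    push_cast
    simp

lemma t_mul_aRow (μ : YoungDiagram) (T : μ.cells → A) (t : Equiv.Perm A)
    (ht : (∀ x : A, (∀ c : μ.cells, T c ≠ x) → t x = x) ∧
      ∀ c : μ.cells, ∃ c' : μ.cells, (c' : ℕ × ℕ).1 = (c : ℕ × ℕ).1 ∧ t (T c) = T c')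
    (htt : t * t = 1) :
    MonoidAlgebra.single t (1 : K) * aRow K μ T = aRow K μ T := by
  unfold aRow
  rw [Finset.mul_sum]
  refine Finset.sum_nbij' (fun σ => t * σ) (fun σ => t * σ) ?_ ?_ ?_ ?_ ?_
  · intro σ hσ
    simp only [Finset.mem_filter, Finset.mem_univ, true_and] at hσ ⊢
    exact rowPred_mul μ T t σ ht hσ
  · intro σ hσ
    simp only [Finset.mem_filter, Finset.mem_univ, true_and] at hσ ⊢
    exact rowPred_mul μ T t σ ht hσ
  · intro σ _; show t * (t * σ) = σ; rw [← mul_assoc, htt, one_mul]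
  · intro σ _; show t * (t * σ) = σ; rw [← mul_assoc, htt, one_mul]
  · intro σ _
    rw [MonoidAlgebra.single_mul_single, one_mul]

end Helpers

/-- `T` a tableau of shape `λ` with subtableau `S` of shape `μ`;
`a = T(u,v)` is an entry of `T` outside `S` at the bottom of column `v`
(`u + 1 = λ'_v`). If `σ` sends the entry `S(i,j)` (with `j > v`) to `a` and fixes the
entry `S(i,v)` in the same row, then `c_λ(T) · c_μ(σ∘S) = 0`. -/
theorem youngSymm_sigmaS_zero (K : Type*) [Field K] [CharZero K] {A : Type*} [Fintype A]
    [DecidableEq A] (l μ : YoungDiagram)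
    (hsub : μ.cells ⊆ l.cells)
    (T : l.cells → A) (hT : Function.Bijective T)
    (u v : ℕ) (hmem : (u, v) ∈ l.cells) (hnot : (u, v) ∉ μ.cells)
    (hu : u + 1 = l.colLen v)
    (σ : Equiv.Perm A) (i j : ℕ) (hv : v < j)
    (hij : (i, j) ∈ μ.cells) (hiv : (i, v) ∈ μ.cells)
    (hσa : σ (T ⟨(i, j), hsub hij⟩) = T ⟨(u, v), hmem⟩)
    (hσfix : σ (T ⟨(i, v), hsub hiv⟩) = T ⟨(i, v), hsub hiv⟩) :
    youngSymm K l T * youngSymm K μ (fun c => σ (T ⟨c.1, hsub c.2⟩)) = 0 := by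
  classical
  set a : A := T ⟨(u, v), hmem⟩ with ha
  set b : A := T ⟨(i, v), hsub hiv⟩ with hb
  have hab : a ≠ b := by
    intro h
    have := hT.1 h
    rw [Subtype.mk_eq_mk] at this
    exact hnot (by rw [Prod.mk.injEq] at this; rw [this.1]; exact hiv)
  set t : Equiv.Perm A := Equiv.swap a b with htdef
  have htt : t * t = 1 := Equiv.swap_mul_self a b
  have hsgn : Equiv.Perm.sign t = -1 := Equiv.Perm.sign_swap hab
  -- t is in the column group of T
  have htcol : (∀ x : A, (∀ c : l.cells, T c ≠ x) → t x = x) ∧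
      ∀ c : l.cells, ∃ c' : l.cells, (c' : ℕ × ℕ).2 = (c : ℕ × ℕ).2 ∧ t (T c) = T c' := by
    constructor
    · intro x hx
      exact Equiv.swap_apply_of_ne_of_ne (fun h => hx _ h.symm) (fun h => hx _ h.symm)
    · intro c
      by_cases h1 : T c = a
      · refine ⟨⟨(i, v), hsub hiv⟩, ?_, ?_⟩
        · have : c = ⟨(u, v), hmem⟩ := hT.1 (by rw [h1])
          rw [this]
        · rw [h1, Equiv.swap_apply_left]
      by_cases h2 : T c = b
      · refine ⟨⟨(u, v), hmem⟩, ?_, ?_⟩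
        · have : c = ⟨(i, v), hsub hiv⟩ := hT.1 (by rw [h2])
          rw [this]
        · rw [h2, Equiv.swap_apply_right]
      · exact ⟨c, rfl, by rw [Equiv.swap_apply_of_ne_of_ne h1 h2]⟩
  -- the twisted subtableau
  set S : μ.cells → A := fun c => σ (T ⟨c.1, hsub c.2⟩) with hS
  have hSinj : Function.Injective S := by
    intro c1 c2 h
    have := hT.1 (σ.injective h)
    rw [Subtype.mk_eq_mk] at this
    exact Subtype.ext this
  have hSa : S ⟨(i, j), hij⟩ = a := hσa
  have hSb : S ⟨(i, v), hiv⟩ = b := hσfix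
  -- t is in the row group of S
  have htrow : (∀ x : A, (∀ c : μ.cells, S c ≠ x) → t x = x) ∧
      ∀ c : μ.cells, ∃ c' : μ.cells, (c' : ℕ × ℕ).1 = (c : ℕ × ℕ).1 ∧ t (S c) = S c' := by
    constructor
    · intro x hx
      exact Equiv.swap_apply_of_ne_of_ne (fun h => hx ⟨(i, j), hij⟩ (by rw [hSa, h]))
        (fun h => hx ⟨(i, v), hiv⟩ (by rw [hSb, h]))
    · intro c
      by_cases h1 : S c = a
      · refine ⟨⟨(i, v), hiv⟩, ?_, ?_⟩
        · have : c = ⟨(i, j), hij⟩ := hSinj (by rw [h1, hSa])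
          rw [this]
        · rw [h1, hSb, Equiv.swap_apply_left]
      by_cases h2 : S c = b
      · refine ⟨⟨(i, j), hij⟩, ?_, ?_⟩
        · have : c = ⟨(i, v), hiv⟩ := hSinj (by rw [h2, hSb])
          rw [this]
        · rw [h2, hSa, Equiv.swap_apply_right]
      · exact ⟨c, rfl, by rw [Equiv.swap_apply_of_ne_of_ne h1 h2]⟩
  -- key cancellation
  have hX : bCol K l T * aRow K μ S = 0 := by
    have h1 : (MonoidAlgebra.single t (1 : K)) * (MonoidAlgebra.single t (1 : K)) = 1 := by
      rw [MonoidAlgebra.single_mul_single, one_mul, htt, MonoidAlgebra.one_def]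
    have h2 : bCol K l T * aRow K μ S = - (bCol K l T * aRow K μ S) := by
      conv_lhs => rw [← mul_one (bCol K l T), ← h1, ← mul_assoc, mul_assoc _ _ (aRow K μ S)]
      rw [bCol_mul_t l T t htcol htt hsgn, t_mul_aRow μ S t htrow htt, neg_mul]
    have h3 : bCol K l T * aRow K μ S + bCol K l T * aRow K μ S = 0 := by
      nth_rewrite 2 [h2]; rw [add_neg_cancel]
    have h4 : (2 : K) • (bCol K l T * aRow K μ S) = 0 := by
      rw [two_smul]; exact h3
    rcases smul_eq_zero.mp h4 with h | h
    · exact absurd h two_ne_zero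
    · exact h
  show aRow K l T * bCol K l T * (aRow K μ S * bCol K μ S) = 0
  rw [mul_assoc, ← mul_assoc (bCol K l T), hX, zero_mul, mul_zero]
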